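/- arXiv:1501.00429 — 4 statements merged into one kernel-verified Lean document; each statement's English description precedes it below -/
import Mathlib

section
/- For meromorphic germs f, g at zero, the holomorphic part of their product satisfies π_+(f·g) = π_+(f)·π_+(g) + π_+(f·π_-(g)) + π_+(g·π_-(f)). -/
/-- Germs of meromorphic functions at `0` modelled by Laurent expansions; `piPlus` is the
projection onto the holomorphic part (minimal subtraction). -/
noncomputable def piPlus (f : LaurentSeries ℂ) : LaurentSeries ℂ :=
  ⟨fun n => if 0 ≤ n then f.coeff n else 0,
    f.isPWO_support'.mono (by
      intro n hn
      simp only [Function.mem_support, ne_eq] at hn ⊢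
      intro h
      exact hn (by simp [h]))⟩

/-- The polar part projection `π₋ = 1 - π₊`. -/
noncomputable def piMinus (f : LaurentSeries ℂ) : LaurentSeries ℂ := f - piPlus f

lemma piPlus_coeff (f : LaurentSeries ℂ) (n : ℤ) :
    (piPlus f).coeff n = if 0 ≤ n then f.coeff n else 0 := rfl

lemma piMinus_coeff (f : LaurentSeries ℂ) (n : ℤ) :
    (piMinus f).coeff n = if 0 ≤ n then 0 else f.coeff n := by
  simp only [piMinus, HahnSeries.coeff_sub, piPlus_coeff]
  split <;> ring

lemma piPlus_add (a b : LaurentSeries ℂ) : piPlus (a + b) = piPlus a + piPlus b := by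
  ext n
  simp only [piPlus_coeff, HahnSeries.coeff_add]
  split <;> simp

lemma piPlus_of_nonneg (a : LaurentSeries ℂ) (h : ∀ n < (0:ℤ), a.coeff n = 0) :
    piPlus a = a := by
  ext n
  simp only [piPlus_coeff]
  by_cases hn : 0 ≤ n
  · rw [if_pos hn]
  · rw [if_neg hn, h n (lt_of_not_ge hn)]

lemma piPlus_mul_plus (f g : LaurentSeries ℂ) :
    piPlus (piPlus f * piPlus g) = piPlus f * piPlus g := by
  apply piPlus_of_nonneg
  intro n hn
  rw [HahnSeries.coeff_mul]
  apply Finset.sum_eq_zero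
  intro ij hij
  rw [Finset.mem_addAntidiagonal] at hij
  obtain ⟨h1, h2, h3⟩ := hij
  simp only [HahnSeries.mem_support, piPlus_coeff, ne_eq] at h1 h2
  by_cases hi : 0 ≤ ij.1
  · by_cases hj : 0 ≤ ij.2
    · omega
    · simp [if_neg hj] at h2
  · simp [if_neg hi] at h1

lemma piPlus_mul_minus (f g : LaurentSeries ℂ) :
    piPlus (piMinus f * piMinus g) = 0 := by
  ext n
  simp only [piPlus_coeff, HahnSeries.coeff_zero]
  by_cases hn : 0 ≤ n
  · rw [if_pos hn]
    rw [HahnSeries.coeff_mul]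
    apply Finset.sum_eq_zero
    intro ij hij
    rw [Finset.mem_addAntidiagonal] at hij
    obtain ⟨h1, h2, h3⟩ := hij
    simp only [HahnSeries.mem_support, piMinus_coeff, ne_eq] at h1 h2
    by_cases hi : 0 ≤ ij.1
    · simp [if_pos hi] at h1
    · by_cases hj : 0 ≤ ij.2
      · simp [if_pos hj] at h2
      · omega
  · rw [if_neg hn]

/-- For meromorphic germs `f, g` at zero,
`π₊(f·g) = π₊(f)·π₊(g) + π₊(f·π₋(g)) + π₊(g·π₋(f))`. -/
theorem stmt_9 (f g : LaurentSeries ℂ) :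
    piPlus (f * g) =
      piPlus f * piPlus g + piPlus (f * piMinus g) + piPlus (g * piMinus f) := by
  have hf : f = piPlus f + piMinus f := by rw [piMinus]; ring
  have hg : g = piPlus g + piMinus g := by rw [piMinus]; ring
  have e1 : f * g = piPlus f * piPlus g + (piPlus f * piMinus g + piMinus f * piPlus g
      + piMinus f * piMinus g) := by
    nth_rewrite 1 [hf]; nth_rewrite 1 [hg]; ring
  have e2 : f * piMinus g = piPlus f * piMinus g + piMinus f * piMinus g := by
    nth_rewrite 1 [hf]; ring
  have e3 : g * piMinus f = piMinus f * piPlus g + piMinus f * piMinus g := by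
    nth_rewrite 1 [hg]; ring
  rw [e1, e2, e3, piPlus_add, piPlus_add, piPlus_add, piPlus_add, piPlus_mul_plus,
    piPlus_add (piMinus f * piPlus g), piPlus_mul_minus]
  ring
end

section
/- Let f be a Schwartz function on (0,∞) admitting an asymptotic expansion f(ε) ~ Σ_{j≥0} b_j ε^{β+j} as ε → 0 for some β ∈ ℂ. Then the Mellin transform M(f)(z) := (1/Γ(z)) ∫_0^∞ ε^{z-1} f(ε) dε, initially defined for Re(z) + Re(β) > 0, extends to a meromorphic function on ℂ that is holomorphic at z = 0, and its value at 0 equals the Hadamard finite part of f at 0 (namely b_{-β} if β is a nonpositive integer, and 0 otherwise). -/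
/-!
Subtracting the first `N` terms of the expansion on `(0, 1]` leaves a remainder `g_N` that is
`O(ε ^ (Re β + N))` at `0` and rapidly decreasing at `∞`, so its Mellin transform is holomorphic on
`Re z > -(Re β + N)`. Since `∫₀¹ ε ^ (z + β + j - 1) dε = 1 / (z + β + j)`, the Mellin transform of
`f` equals `mellin g_N z + ∑_{j<N} b_j / (z + β + j)`. Multiplying by `1 / Γ(z) = z / Γ(z + 1)`
gives an expression that is meromorphic on this half-plane and independent of `N`; at `z = 0`
every term vanishes except `b_j · z / (z + β + j)` with `β + j = 0`, which is identically `b_j`.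
-/

open Filter Asymptotics MeasureTheory Set Complex Topology

section RapidDecay

variable {E : Type*} [NormedAddCommGroup E]

def IsRapidlyDecreasing (g : ℝ → E) : Prop :=
  ∀ n : ℕ, g =O[atTop] fun ε : ℝ => ε ^ (-(n : ℝ))

theorem IsRapidlyDecreasing.congr {g h : ℝ → E} (hg : IsRapidlyDecreasing g)
    (hgh : g =ᶠ[atTop] h) : IsRapidlyDecreasing h :=
  fun n => (hg n).congr' hgh EventuallyEq.rfl

theorem IsRapidlyDecreasing.mellinConvergent [NormedSpace ℂ E] {g : ℝ → E} {a : ℝ} {s : ℂ}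
    (hloc : LocallyIntegrableOn g (Ioi 0)) (htop : IsRapidlyDecreasing g)
    (hbot : g =O[𝓝[>] 0] (· ^ a)) (hs : -a < s.re) : MellinConvergent g s := by
  refine mellinConvergent_of_isBigO_rpow hloc (htop (⌈s.re⌉₊ + 1)) ?_
    (by rwa [neg_neg]) hs
  push_cast
  exact (Nat.le_ceil _).trans_lt (lt_add_one _)

theorem IsRapidlyDecreasing.differentiableAt_mellin [NormedSpace ℂ E] {g : ℝ → E} {a : ℝ} {s : ℂ}
    (hloc : LocallyIntegrableOn g (Ioi 0)) (htop : IsRapidlyDecreasing g)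
    (hbot : g =O[𝓝[>] 0] (· ^ a)) (hs : -a < s.re) : DifferentiableAt ℂ (mellin g) s := by
  refine mellin_differentiableAt_of_isBigO_rpow hloc (htop (⌈s.re⌉₊ + 1)) ?_
    (by rwa [neg_neg]) hs
  push_cast
  exact (Nat.le_ceil _).trans_lt (lt_add_one _)

end RapidDecay

noncomputable def expansionPartialSum (β : ℂ) (b : ℕ → ℂ) (N : ℕ) (ε : ℝ) : ℂ :=
  ∑ j ∈ Finset.range N, b j * (ε : ℂ) ^ (β + (j : ℂ))

def HasPowerExpansionAtZero (f : ℝ → ℂ) (β : ℂ) (b : ℕ → ℂ) : Prop :=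
  ∀ N : ℕ, (fun ε => f ε - expansionPartialSum β b N ε) =O[𝓝[>] 0]
    fun ε : ℝ => ε ^ (β.re + (N : ℝ))

/-- Only the part of the expansion on `(0, 1]` is subtracted, so that nothing changes near `∞`. -/
noncomputable def expansionRemainder (f : ℝ → ℂ) (β : ℂ) (b : ℕ → ℂ) (N : ℕ) (ε : ℝ) : ℂ :=
  f ε - (Ioc 0 1).indicator (expansionPartialSum β b N) ε

section Remainder

variable {f : ℝ → ℂ} {β : ℂ} {b : ℕ → ℂ}

theorem continuousOn_expansionPartialSum (β : ℂ) (b : ℕ → ℂ) (N : ℕ) :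
    ContinuousOn (expansionPartialSum β b N) (Ioi 0) := by
  refine continuousOn_finsetSum _ fun j _ => continuousOn_const.mul fun x hx => ?_
  exact (continuousAt_ofReal_cpow_const _ _ (Or.inr (ne_of_gt hx))).continuousWithinAt

theorem expansionRemainder_zero : expansionRemainder f β b 0 = f := by
  ext ε
  simp [expansionRemainder, expansionPartialSum]

theorem locallyIntegrableOn_expansionRemainder (hcont : ContinuousOn f (Ioi 0)) (N : ℕ) :
    LocallyIntegrableOn (expansionRemainder f β b N) (Ioi 0) := by
  rw [locallyIntegrableOn_iff isOpen_Ioi.isLocallyClosed]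
  intro k hk hkc
  exact ((hcont.mono hk).integrableOn_compact hkc).sub
    ((((continuousOn_expansionPartialSum β b N).mono hk).integrableOn_compact hkc).indicator
      measurableSet_Ioc)

theorem isRapidlyDecreasing_expansionRemainder (hdecay : IsRapidlyDecreasing f) (N : ℕ) :
    IsRapidlyDecreasing (expansionRemainder f β b N) := by
  refine hdecay.congr ?_
  filter_upwards [eventually_gt_atTop (1 : ℝ)] with ε hε
  simp [expansionRemainder, indicator_of_notMem (fun h : ε ∈ Ioc 0 1 => h.2.not_gt hε)]

theorem HasPowerExpansionAtZero.isBigO_expansionRemainder (hasymp : HasPowerExpansionAtZero f β b)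
    (N : ℕ) : expansionRemainder f β b N =O[𝓝[>] 0] (· ^ (β.re + (N : ℝ))) := by
  refine (hasymp N).congr' ?_ EventuallyEq.rfl
  filter_upwards [Ioc_mem_nhdsGT (zero_lt_one' ℝ)] with ε hε
  simp [expansionRemainder, indicator_of_mem hε]

theorem expansionRemainder_eq_succ_add (N : ℕ) (ε : ℝ) :
    expansionRemainder f β b N ε = expansionRemainder f β b (N + 1) ε +
      b N • (Ioc 0 1).indicator (fun t : ℝ => (t : ℂ) ^ (β + N)) ε := by
  by_cases hε : ε ∈ Ioc 0 1
  · simp only [expansionRemainder, expansionPartialSum, indicator_of_mem hε,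
      Finset.sum_range_succ, smul_eq_mul]
    ring
  · simp [expansionRemainder, indicator_of_notMem hε]

theorem mellinConvergent_expansionRemainder (hcont : ContinuousOn f (Ioi 0))
    (hdecay : IsRapidlyDecreasing f) (hasymp : HasPowerExpansionAtZero f β b) {N : ℕ} {z : ℂ}
    (hz : 0 < z.re + β.re + N) : MellinConvergent (expansionRemainder f β b N) z :=
  (isRapidlyDecreasing_expansionRemainder hdecay N).mellinConvergent
    (locallyIntegrableOn_expansionRemainder hcont N) (hasymp.isBigO_expansionRemainder N)
    (by linarith)

theorem analyticAt_mellin_expansionRemainder (hcont : ContinuousOn f (Ioi 0))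
    (hdecay : IsRapidlyDecreasing f) (hasymp : HasPowerExpansionAtZero f β b) {N : ℕ} {z : ℂ}
    (hz : 0 < z.re + β.re + N) : AnalyticAt ℂ (mellin (expansionRemainder f β b N)) z := by
  have hopen : IsOpen {w : ℂ | 0 < w.re + β.re + N} := by
    refine isOpen_lt continuous_const ?_
    fun_prop
  refine DifferentiableOn.analyticAt (fun w hw => ?_) (hopen.mem_nhds hz)
  exact ((isRapidlyDecreasing_expansionRemainder hdecay N).differentiableAt_mellin
    (locallyIntegrableOn_expansionRemainder hcont N) (hasymp.isBigO_expansionRemainder N)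
    (by linarith [show 0 < w.re + β.re + N from hw])).differentiableWithinAt

theorem mellin_expansionRemainder_eq_succ_add (hcont : ContinuousOn f (Ioi 0))
    (hdecay : IsRapidlyDecreasing f) (hasymp : HasPowerExpansionAtZero f β b) {N : ℕ} {z : ℂ}
    (hz : 0 < z.re + β.re + N) :
    mellin (expansionRemainder f β b N) z =
      mellin (expansionRemainder f β b (N + 1)) z + b N / (z + (β + N)) := by
  have hconv := mellinConvergent_expansionRemainder hcont hdecay hasymp (N := N + 1) (z := z)
    (by push_cast; linarith)
  have hpow := hasMellin_cpow_Ioc (β + N) (s := z) (by simp only [add_re, natCast_re]; linarith)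
  have hsmul := hasMellin_const_smul hpow.1 (b N)
  rw [hpow.2, smul_eq_mul, mul_one_div] at hsmul
  have hsplit : expansionRemainder f β b N = fun t => expansionRemainder f β b (N + 1) t +
      b N • (Ioc 0 1).indicator (fun t : ℝ => (t : ℂ) ^ (β + N)) t :=
    funext (expansionRemainder_eq_succ_add N)
  rw [hsplit, (hasMellin_add hconv hsmul.1).2, hsmul.2]

end Remainder

theorem inv_Gamma_add_one_mul_self_mul (z a : ℂ) :
    (Gamma (z + 1))⁻¹ * (z * a) = 1 / Gamma z * a := by
  rcases eq_or_ne z 0 with rfl | hz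
  · simp [Gamma_zero]
  · rw [Gamma_add_one z hz, mul_inv_rev, one_div, mul_assoc, inv_mul_cancel_left₀ hz]

theorem analyticAt_one_sub_div_add_self (c : ℂ) : AnalyticAt ℂ (fun w : ℂ => 1 - c / (w + c)) 0 := by
  rcases eq_or_ne c 0 with rfl | hc
  · simpa using analyticAt_const
  · exact analyticAt_const.sub (analyticAt_const.div (by fun_prop) (by simpa using hc))

/-- The factor `z / (z + (β + j))` is written as `1 - (β + j) / (z + (β + j))`, which is the
constant `1` rather than `z / z` when `β + j = 0`. -/
noncomputable def partialContinuation (f : ℝ → ℂ) (β : ℂ) (b : ℕ → ℂ) (N : ℕ) (z : ℂ) : ℂ :=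
  (Gamma (z + 1))⁻¹ * (z * mellin (expansionRemainder f β b N) z +
    ∑ j ∈ Finset.range N, b j * (1 - (β + j) / (z + (β + j))))

noncomputable def mellinContinuation (f : ℝ → ℂ) (β : ℂ) (b : ℕ → ℂ) (z : ℂ) : ℂ :=
  partialContinuation f β b (⌈-(z.re + β.re)⌉₊ + 1) z

section Continuation

variable {f : ℝ → ℂ} {β : ℂ} {b : ℕ → ℂ}

theorem partialContinuation_zero_left (z : ℂ) :
    partialContinuation f β b 0 z = 1 / Gamma z * mellin f z := by
  simp only [partialContinuation, expansionRemainder_zero, Finset.range_zero, Finset.sum_empty,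
    add_zero, inv_Gamma_add_one_mul_self_mul]

theorem partialContinuation_zero_right (N : ℕ) :
    partialContinuation f β b N 0 = ∑ j ∈ Finset.range N, if β = -(j : ℂ) then b j else 0 := by
  simp only [partialContinuation, zero_add, Gamma_one, inv_one, one_mul, zero_mul]
  refine Finset.sum_congr rfl fun j _ => ?_
  split_ifs with h <;> rw [eq_neg_iff_add_eq_zero] at h
  · simp [h]
  · simp [div_self h]

theorem partialContinuation_succ (hcont : ContinuousOn f (Ioi 0))
    (hdecay : IsRapidlyDecreasing f) (hasymp : HasPowerExpansionAtZero f β b) {N : ℕ} {z : ℂ}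
    (hz : 0 < z.re + β.re + N) :
    partialContinuation f β b (N + 1) z = partialContinuation f β b N z := by
  have hne : z + (β + N) ≠ 0 := fun h => by
    have := congrArg re h
    simp only [add_re, natCast_re, zero_re] at this
    linarith
  rw [partialContinuation, partialContinuation,
    mellin_expansionRemainder_eq_succ_add hcont hdecay hasymp hz, Finset.sum_range_succ]
  congr 1
  field_simp
  ring

theorem partialContinuation_eq_of_le (hcont : ContinuousOn f (Ioi 0))
    (hdecay : IsRapidlyDecreasing f) (hasymp : HasPowerExpansionAtZero f β b) {N N' : ℕ} {z : ℂ}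
    (hle : N ≤ N') (hz : 0 < z.re + β.re + N) :
    partialContinuation f β b N' z = partialContinuation f β b N z := by
  induction N', hle using Nat.le_induction with
  | base => rfl
  | succ N' hle ih =>
    rw [partialContinuation_succ hcont hdecay hasymp, ih]
    linarith [show (N : ℝ) ≤ N' by exact_mod_cast hle]

theorem mellinContinuation_eq (hcont : ContinuousOn f (Ioi 0))
    (hdecay : IsRapidlyDecreasing f) (hasymp : HasPowerExpansionAtZero f β b) {N : ℕ} {z : ℂ}
    (hz : 0 < z.re + β.re + N) : mellinContinuation f β b z = partialContinuation f β b N z := by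
  have hz₀ : 0 < z.re + β.re + ((⌈-(z.re + β.re)⌉₊ + 1 : ℕ) : ℝ) := by
    push_cast
    linarith [Nat.le_ceil (-(z.re + β.re))]
  rw [mellinContinuation, ← partialContinuation_eq_of_le hcont hdecay hasymp (le_max_left _ N) hz₀,
    partialContinuation_eq_of_le hcont hdecay hasymp (le_max_right _ N) hz]

theorem mellinContinuation_eventuallyEq (hcont : ContinuousOn f (Ioi 0))
    (hdecay : IsRapidlyDecreasing f) (hasymp : HasPowerExpansionAtZero f β b) {N : ℕ} {z : ℂ}
    (hz : 0 < z.re + β.re + N) : mellinContinuation f β b =ᶠ[𝓝 z] partialContinuation f β b N := by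
  have hopen : IsOpen {w : ℂ | 0 < w.re + β.re + N} := by
    refine isOpen_lt continuous_const ?_
    fun_prop
  filter_upwards [hopen.mem_nhds hz] with w hw using mellinContinuation_eq hcont hdecay hasymp hw

theorem meromorphicAt_partialContinuation (hcont : ContinuousOn f (Ioi 0))
    (hdecay : IsRapidlyDecreasing f) (hasymp : HasPowerExpansionAtZero f β b) {N : ℕ} {z : ℂ}
    (hz : 0 < z.re + β.re + N) : MeromorphicAt (partialContinuation f β b N) z := by
  have hΓ : AnalyticAt ℂ (fun w : ℂ => (Gamma (w + 1))⁻¹) z :=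
    (differentiable_one_div_Gamma.comp (differentiable_id.add_const 1)).analyticAt z
  have hmellin := analyticAt_mellin_expansionRemainder hcont hdecay hasymp hz
  exact hΓ.meromorphicAt.mul ((analyticAt_id.mul hmellin).meromorphicAt.add
    (MeromorphicAt.fun_sum fun j _ => by fun_prop))

theorem analyticAt_partialContinuation_zero (hcont : ContinuousOn f (Ioi 0))
    (hdecay : IsRapidlyDecreasing f) (hasymp : HasPowerExpansionAtZero f β b) {N : ℕ}
    (hN : 0 < β.re + N) : AnalyticAt ℂ (partialContinuation f β b N) 0 := by
  have hΓ : AnalyticAt ℂ (fun w : ℂ => (Gamma (w + 1))⁻¹) 0 :=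
    (differentiable_one_div_Gamma.comp (differentiable_id.add_const 1)).analyticAt 0
  have hmellin := analyticAt_mellin_expansionRemainder hcont hdecay hasymp (z := 0)
    (by simpa using hN)
  exact hΓ.mul ((analyticAt_id.mul hmellin).add (Finset.analyticAt_fun_sum _
    fun j _ => analyticAt_const.mul (analyticAt_one_sub_div_add_self _)))

end Continuation

/-- Let `f` be a Schwartz-type function on `(0,∞)` (continuous, with rapid decay at `∞`)
admitting an asymptotic expansion `f(ε) ~ ∑_{j≥0} b_j ε^{β+j}` as `ε → 0⁺`. Then the
Mellin transform `M(f)(z) = (1/Γ(z)) ∫_0^∞ ε^{z-1} f(ε) dε`, initially defined for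
`Re z + Re β > 0`, extends to a meromorphic function on `ℂ` that is holomorphic at
`z = 0`, whose value at `0` is the Hadamard finite part of `f` at `0`
(`b_m` if `β = -m` for a nonnegative integer `m`, and `0` otherwise). -/
theorem stmt_11 (f : ℝ → ℂ) (β : ℂ) (b : ℕ → ℂ)
    (hcont : ContinuousOn f (Set.Ioi 0))
    (hdecay : ∀ n : ℕ, f =O[atTop] fun ε : ℝ => ε ^ (-(n : ℝ)))
    (hasymp : ∀ N : ℕ,
      (fun ε : ℝ => f ε - ∑ j ∈ Finset.range N, b j * (ε : ℂ) ^ (β + (j : ℂ)))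
        =O[nhdsWithin 0 (Set.Ioi 0)] fun ε : ℝ => ε ^ (β.re + (N : ℝ))) :
    ∃ M : ℂ → ℂ, (∀ z : ℂ, MeromorphicAt M z) ∧ AnalyticAt ℂ M 0 ∧
      (∀ z : ℂ, 0 < z.re + β.re →
        M z = (1 / Complex.Gamma z) *
          ∫ ε in Set.Ioi (0 : ℝ), (ε : ℂ) ^ (z - 1) * f ε) ∧
      (∀ m : ℕ, β = -(m : ℂ) → M 0 = b m) ∧
      ((∀ m : ℕ, β ≠ -(m : ℂ)) → M 0 = 0) := by
  have hd : IsRapidlyDecreasing f := hdecay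
  have ha : HasPowerExpansionAtZero f β b := hasymp
  have eq_at_zero : ∀ N : ℕ, 0 < β.re + N →
      mellinContinuation f β b 0 = ∑ j ∈ Finset.range N, if β = -(j : ℂ) then b j else 0 :=
    fun N hN => by
      rw [mellinContinuation_eq hcont hd ha (by simpa using hN), partialContinuation_zero_right]
  obtain ⟨N₀, hN₀⟩ := exists_nat_gt (-β.re)
  refine ⟨mellinContinuation f β b, fun z => ?_, ?_, fun z hz => ?_, fun m hm => ?_, fun hβ => ?_⟩
  · obtain ⟨N, hN⟩ := exists_nat_gt (-(z.re + β.re))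
    have hz : 0 < z.re + β.re + N := by linarith
    exact (meromorphicAt_partialContinuation hcont hd ha hz).congr
      ((mellinContinuation_eventuallyEq hcont hd ha hz).symm.filter_mono nhdsWithin_le_nhds)
  · have hN : 0 < β.re + N₀ := by linarith
    exact (analyticAt_partialContinuation_zero hcont hd ha hN).congr
      (mellinContinuation_eventuallyEq hcont hd ha (by simpa using hN)).symm
  · rw [mellinContinuation_eq hcont hd ha (N := 0) (by simpa using hz),
      partialContinuation_zero_left]
    rfl
  · subst hm
    rw [eq_at_zero (m + 1) (by simp)]
    simp
  · rw [eq_at_zero N₀ (by linarith)]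
    exact Finset.sum_eq_zero fun j _ => if_neg (hβ j)
end

section
/- Let C be a connected coalgebra, A a unital algebra with a linear decomposition A = A_1 ⊕ A_2 where 1_A ∈ A_1, and P the projection onto A_1 along A_2. For φ ∈ G(C,A), the maps φ_1, φ_2 defined recursively on Ker ε by φ_1(x) = -P(φ(x) + Σ φ_1(x')φ(x'')) and φ_2(x) = (id - P)(φ(x) + Σ φ_1(x')φ(x'')) (with Δ̄x = Σ x'⊗x'') satisfy φ_i(Ker ε) ⊆ A_i and φ = φ_1^{∗(-1)} ∗ φ_2; moreover φ_1, φ_2 are the unique elements of G(C,A) with these containment properties satisfying this factorization. -/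
/-!
The recursion for `φ₁` says exactly that `φ₁` is a fixed point of
`ψ ↦ e - P ∘ (ψ ∗ (φ - e))`. Since `φ - e` vanishes at `1_C` and the reduced coproduct lowers
the filtration degree, the value of this map on `F (n + 1)` only depends on `ψ` restricted to `F n`:
the map is a contraction for the filtration, so it has a unique fixed point, obtained by gluing its
iterates. A fixed point `ψ` with `ψ(1) = 1` is the same thing as a `ψ` with `ψ(Ker ε) ⊆ A₁` and
`(ψ ∗ φ)(Ker ε) ⊆ A₂`, which gives existence and uniqueness of the factorization, with
`φ₂ = φ₁ ∗ φ`. The convolution inverse of `φ₁ = e + α`, `α(1) = 0`, is found in the same way as the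
fixed point of `ψ ↦ e - α ∗ ψ` (and of `ψ ↦ e - ψ ∗ α` on the other side).
-/

open TensorProduct

/-- The convolution product `φ∗ψ = m_A ∘ (φ ⊗ ψ) ∘ Δ_C`. -/
noncomputable def conv {C A : Type*} [AddCommMonoid C] [Module ℝ C] [Coalgebra ℝ C]
    [Ring A] [Algebra ℝ A] (φ ψ : C →ₗ[ℝ] A) : C →ₗ[ℝ] A :=
  LinearMap.mul' ℝ A ∘ₗ TensorProduct.map φ ψ ∘ₗ Coalgebra.comul (R := ℝ)

/-- The convolution unit `e = u_A ∘ ε_C`. -/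
noncomputable def convUnit (C A : Type*) [AddCommMonoid C] [Module ℝ C] [Coalgebra ℝ C]
    [Ring A] [Algebra ℝ A] : C →ₗ[ℝ] A :=
  Algebra.linearMap ℝ A ∘ₗ Coalgebra.counit (R := ℝ)

open Function Set

section FilteredFixedPoint

variable {R M N : Type*} [Semiring R] [AddCommMonoid M] [Module R M] [AddCommMonoid N]
  [Module R N] {F : ℕ → Submodule R M}

theorem Submodule.exists_mem_of_iSup_eq_top (hmono : Monotone F) (htop : ⨆ n, F n = ⊤) (x : M) :
    ∃ n, x ∈ F n :=
  (Submodule.mem_iSup_of_chain ⟨F, hmono⟩ x).mp (htop ▸ Submodule.mem_top)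

theorem LinearMap.exists_eqOn_of_iSup_eq_top (hmono : Monotone F) (htop : ⨆ n, F n = ⊤)
    (g : ℕ → M →ₗ[R] N) (hg : ∀ n m, n ≤ m → EqOn (g m) (g n) (F n)) :
    ∃ f : M →ₗ[R] N, ∀ n, EqOn f (g n) (F n) := by
  choose idx hidx using Submodule.exists_mem_of_iSup_eq_top hmono htop
  have key : ∀ n x, x ∈ F n → g (idx x) x = g n x := fun n x hx => by
    rw [← hg _ _ (le_max_left (idx x) n) (hidx x), hg _ _ (le_max_right _ _) hx]
  refine ⟨{ toFun := fun x => g (idx x) x, map_add' := fun x y => ?_, map_smul' := fun c x => ?_ },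
    fun n x hx => key n x hx⟩
  · have hx : x ∈ F (max (idx x) (idx y)) := hmono (le_max_left _ _) (hidx x)
    have hy : y ∈ F (max (idx x) (idx y)) := hmono (le_max_right _ _) (hidx y)
    simp only [key _ _ (add_mem hx hy), key _ x hx, key _ y hy, map_add]
  · simp only [key _ _ (Submodule.smul_mem _ c (hidx x)), map_smul, RingHom.id_apply]

variable {Φ : (M →ₗ[R] N) → M →ₗ[R] N}

theorem eqOn_iterate_succ (h0 : ∀ f g, EqOn (Φ f) (Φ g) (F 0))
    (hΦ : ∀ n (f g : M →ₗ[R] N), EqOn f g (F n) → EqOn (Φ f) (Φ g) (F (n + 1))) (n : ℕ)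
    (f g : M →ₗ[R] N) : EqOn (Φ^[n + 1] f) (Φ^[n + 1] g) (F n) := by
  induction n generalizing f g with
  | zero => exact h0 f g
  | succ n ih =>
    rw [iterate_succ_apply', iterate_succ_apply' Φ (n + 1) g]
    exact hΦ n _ _ (ih f g)

theorem existsUnique_isFixedPt_of_eqOn (hmono : Monotone F) (htop : ⨆ n, F n = ⊤)
    (h0 : ∀ f g, EqOn (Φ f) (Φ g) (F 0))
    (hΦ : ∀ n (f g : M →ₗ[R] N), EqOn f g (F n) → EqOn (Φ f) (Φ g) (F (n + 1))) :
    ∃! f, IsFixedPt Φ f := by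
  obtain ⟨f, hf⟩ := LinearMap.exists_eqOn_of_iSup_eq_top hmono htop (fun n => Φ^[n + 1] 0)
    fun n m hnm => by
      obtain ⟨k, rfl⟩ := Nat.exists_eq_add_of_le hnm
      simp only [Nat.add_right_comm n k 1, iterate_add_apply]
      exact eqOn_iterate_succ h0 hΦ n _ _
  have hfix : IsFixedPt Φ f := LinearMap.ext fun x => by
    obtain ⟨n, hx⟩ := Submodule.exists_mem_of_iSup_eq_top hmono htop x
    have hx' : x ∈ F (n + 1) := hmono n.le_succ hx
    calc Φ f x = Φ (Φ^[n + 1] 0) x := hΦ n _ _ (hf n) hx'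
      _ = f x := by rw [hf (n + 1) hx', iterate_succ_apply' Φ (n + 1)]
  refine ⟨f, hfix, fun g hg => LinearMap.ext fun x => ?_⟩
  obtain ⟨n, hx⟩ := Submodule.exists_mem_of_iSup_eq_top hmono htop x
  rw [← (hg.iterate (n + 1)).eq, ← (hfix.iterate (n + 1)).eq]
  exact eqOn_iterate_succ h0 hΦ n g f hx

end FilteredFixedPoint

theorem TensorProduct.map_eq_map_of_mem_range {R M N N' : Type*} [CommSemiring R]
    [AddCommMonoid M] [Module R M] [AddCommMonoid N] [Module R N] [AddCommMonoid N'] [Module R N']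
    {S : Submodule R M} {f g : M →ₗ[R] N} {f' g' : M →ₗ[R] N'} (hf : EqOn f g S)
    (hf' : EqOn f' g' S) {t : M ⊗[R] M}
    (ht : t ∈ LinearMap.range (TensorProduct.map S.subtype S.subtype)) :
    TensorProduct.map f f' t = TensorProduct.map g g' t := by
  obtain ⟨s, rfl⟩ := ht
  have h : f ∘ₗ S.subtype = g ∘ₗ S.subtype := LinearMap.ext fun y => hf y.2
  have h' : f' ∘ₗ S.subtype = g' ∘ₗ S.subtype := LinearMap.ext fun y => hf' y.2
  rw [← LinearMap.comp_apply, ← TensorProduct.map_comp, h, h', TensorProduct.map_comp,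
    LinearMap.comp_apply]

section Convolution

/- `conv` and `convUnit` are the multiplication and unit of Mathlib's convolution ring
`WithConv (C →ₗ[ℝ] A)`, read through `ofConv`; the ring laws transfer definitionally. -/

open WithConv

variable {C A : Type*} [AddCommMonoid C] [Module ℝ C] [Coalgebra ℝ C] [Ring A] [Algebra ℝ A]

theorem conv_assoc (f g h : C →ₗ[ℝ] A) : conv (conv f g) h = conv f (conv g h) :=
  congrArg ofConv (mul_assoc (toConv f) (toConv g) (toConv h))

theorem convUnit_conv (f : C →ₗ[ℝ] A) : conv (convUnit C A) f = f :=
  congrArg ofConv (one_mul (toConv f))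

theorem conv_convUnit (f : C →ₗ[ℝ] A) : conv f (convUnit C A) = f :=
  congrArg ofConv (mul_one (toConv f))

theorem add_conv (f g h : C →ₗ[ℝ] A) : conv (f + g) h = conv f h + conv g h :=
  congrArg ofConv (add_mul (toConv f) (toConv g) (toConv h))

theorem conv_add (f g h : C →ₗ[ℝ] A) : conv f (g + h) = conv f g + conv f h :=
  congrArg ofConv (mul_add (toConv f) (toConv g) (toConv h))

theorem conv_sub (f g h : C →ₗ[ℝ] A) : conv f (g - h) = conv f g - conv f h :=
  congrArg ofConv (mul_sub (toConv f) (toConv g) (toConv h))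

theorem convUnit_apply_of_counit_eq_zero {x : C} (hx : Coalgebra.counit (R := ℝ) x = 0) :
    convUnit C A x = 0 := by
  simp [convUnit, hx]

end Convolution

section ConilpotentFiltration

open Coalgebra

variable {R C : Type*} [CommRing R] [AddCommGroup C] [Module R C] [Coalgebra R C]

variable (R) in
def reducedComul (one x : C) : C ⊗[R] C :=
  comul x - (one ⊗ₜ[R] x + x ⊗ₜ[R] one)

variable (R) in
structure IsConilpotentFiltration (one : C) (F : ℕ → Submodule R C) : Prop where
  monotone : Monotone F
  zero_eq : F 0 = Submodule.span R {one}
  iSup_eq_top : ⨆ n, F n = ⊤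
  reducedComul_mem : ∀ n, ∀ x ∈ F (n + 1),
    reducedComul R one x ∈ LinearMap.range (TensorProduct.map (F n).subtype (F n).subtype)

namespace IsConilpotentFiltration

variable {one : C} {F : ℕ → Submodule R C} (hF : IsConilpotentFiltration R one F)
include hF

theorem one_mem (n : ℕ) : one ∈ F n :=
  hF.monotone n.zero_le (hF.zero_eq ▸ Submodule.mem_span_singleton_self one)

theorem eqOn_zero {N : Type*} [AddCommMonoid N] [Module R N] {f g : C →ₗ[R] N}
    (h : f one = g one) : EqOn f g (F 0) := by
  rw [hF.zero_eq]
  exact LinearMap.eqOn_span' (Set.eqOn_singleton.mpr h)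

end IsConilpotentFiltration

theorem LinearMap.ext_of_isGroupLikeElem {N : Type*} [AddCommGroup N] [Module R N] {one : C}
    (hone : IsGroupLikeElem R one) {f g : C →ₗ[R] N} (h1 : f one = g one)
    (hker : ∀ x, counit (R := R) x = 0 → f x = g x) : f = g := by
  ext x
  have hx : counit (R := R) (x - counit (R := R) x • one) = 0 := by
    simp [hone.counit_eq_one]
  have := hker _ hx
  rwa [map_sub, map_sub, map_smul, map_smul, h1, sub_left_inj] at this

end ConilpotentFiltration

section ConnectedConvolution

open Coalgebra

variable {C A : Type*} [AddCommGroup C] [Module ℝ C] [Coalgebra ℝ C] [Ring A] [Algebra ℝ A]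
  {one : C}

theorem conv_apply_of_isGroupLikeElem (hone : IsGroupLikeElem ℝ one) (f g : C →ₗ[ℝ] A) :
    conv f g one = f one * g one := by
  simp [conv, hone.comul_eq_tmul_self]

theorem convUnit_apply_of_isGroupLikeElem (hone : IsGroupLikeElem ℝ one) :
    convUnit C A one = 1 := by
  simp [convUnit, hone.counit_eq_one]

theorem conv_apply_eq_reducedComul_add (one : C) (f g : C →ₗ[ℝ] A) (x : C) :
    conv f g x = LinearMap.mul' ℝ A (TensorProduct.map f g (reducedComul ℝ one x)) +
      (f one * g x + f x * g one) := by
  simp only [conv, reducedComul, LinearMap.comp_apply, map_sub, map_add, TensorProduct.map_tmul,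
    LinearMap.mul'_apply]
  abel

variable {F : ℕ → Submodule ℝ C} {β : C →ₗ[ℝ] A}

theorem conv_eqOn_succ_left (hF : IsConilpotentFiltration ℝ one F) (hβ : β one = 0) {n : ℕ}
    {f g : C →ₗ[ℝ] A} (h : EqOn f g (F n)) : EqOn (conv f β) (conv g β) (F (n + 1)) := by
  intro x hx
  rw [conv_apply_eq_reducedComul_add one, conv_apply_eq_reducedComul_add one,
    TensorProduct.map_eq_map_of_mem_range h (eqOn_refl _ _) (hF.reducedComul_mem n x hx),
    h (hF.one_mem n), hβ, mul_zero, mul_zero]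

theorem conv_eqOn_succ_right (hF : IsConilpotentFiltration ℝ one F) (hβ : β one = 0) {n : ℕ}
    {f g : C →ₗ[ℝ] A} (h : EqOn f g (F n)) : EqOn (conv β f) (conv β g) (F (n + 1)) := by
  intro x hx
  rw [conv_apply_eq_reducedComul_add one, conv_apply_eq_reducedComul_add one,
    TensorProduct.map_eq_map_of_mem_range (eqOn_refl _ _) h (hF.reducedComul_mem n x hx),
    h (hF.one_mem n), hβ, zero_mul, zero_mul]

theorem existsUnique_isFixedPt_sub_comp_conv (hone : IsGroupLikeElem ℝ one)
    (hF : IsConilpotentFiltration ℝ one F) (c : C →ₗ[ℝ] A) (L : A →ₗ[ℝ] A) (hβ : β one = 0) :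
    ∃! f, IsFixedPt (fun f => c - L ∘ₗ conv f β) f := by
  refine existsUnique_isFixedPt_of_eqOn hF.monotone hF.iSup_eq_top
    (fun f g => hF.eqOn_zero ?_) fun n f g h x hx => ?_
  · simp [conv_apply_of_isGroupLikeElem hone, hβ]
  · simp only [LinearMap.sub_apply, LinearMap.comp_apply, conv_eqOn_succ_left hF hβ h hx]

theorem existsUnique_isFixedPt_sub_conv (hone : IsGroupLikeElem ℝ one)
    (hF : IsConilpotentFiltration ℝ one F) (c : C →ₗ[ℝ] A) (hβ : β one = 0) :
    ∃! f, IsFixedPt (fun f => c - conv β f) f := by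
  refine existsUnique_isFixedPt_of_eqOn hF.monotone hF.iSup_eq_top
    (fun f g => hF.eqOn_zero ?_) fun n f g h x hx => ?_
  · simp [conv_apply_of_isGroupLikeElem hone, hβ]
  · simp only [LinearMap.sub_apply, conv_eqOn_succ_right hF hβ h hx]

theorem exists_conv_eq_convUnit (hone : IsGroupLikeElem ℝ one)
    (hF : IsConilpotentFiltration ℝ one F) {f : C →ₗ[ℝ] A} (hf : f one = 1) :
    ∃ g, conv f g = convUnit C A ∧ conv g f = convUnit C A := by
  set α := f - convUnit C A
  have hα : α one = 0 := by
    rw [LinearMap.sub_apply, hf, convUnit_apply_of_isGroupLikeElem hone, sub_self]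
  have hfα : f = convUnit C A + α := (add_sub_cancel _ _).symm
  obtain ⟨g, hg, -⟩ := existsUnique_isFixedPt_sub_conv hone hF (convUnit C A) hα
  obtain ⟨g', hg', -⟩ := existsUnique_isFixedPt_sub_comp_conv hone hF (convUnit C A)
    LinearMap.id hα
  have hfg : conv f g = convUnit C A := by
    rw [hfα, add_conv, convUnit_conv]
    exact eq_sub_iff_add_eq.mp hg.symm
  have hg'f : conv g' f = convUnit C A := by
    rw [hfα, conv_add, conv_convUnit]
    exact eq_sub_iff_add_eq.mp (LinearMap.id_comp (conv g' α) ▸ hg'.symm)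
  have hg'g : g' = g := by
    calc g' = conv g' (conv f g) := by rw [hfg, conv_convUnit]
      _ = g := by rw [← conv_assoc, hg'f, convUnit_conv]
  exact ⟨g, hfg, hg'g ▸ hg'f⟩

end ConnectedConvolution

theorem LinearMap.apply_mem_and_sub_apply_mem {R M : Type*} [Ring R] [AddCommGroup M]
    [Module R M] {M₁ M₂ : Submodule R M} (hsup : M₁ ⊔ M₂ = ⊤) {P : M →ₗ[R] M}
    (hP₁ : ∀ a ∈ M₁, P a = a) (hP₂ : ∀ a ∈ M₂, P a = 0) (a : M) : P a ∈ M₁ ∧ a - P a ∈ M₂ := by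
  obtain ⟨b, hb, c, hc, rfl⟩ := Submodule.mem_sup.mp (hsup ▸ Submodule.mem_top : a ∈ M₁ ⊔ M₂)
  rw [map_add, hP₁ b hb, hP₂ c hc, add_zero, add_sub_cancel_left]
  exact ⟨hb, hc⟩

section Birkhoff

open Coalgebra

variable {C A : Type*} [AddCommGroup C] [Module ℝ C] [Coalgebra ℝ C] [Ring A] [Algebra ℝ A]
  {one : C} {φ ψ : C →ₗ[ℝ] A}

theorem conv_sub_convUnit_apply (hφ : φ one = 1) (hψ : ψ one = 1) (x : C) :
    conv ψ (φ - convUnit C A) x =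
      φ x + LinearMap.mul' ℝ A (TensorProduct.map ψ φ (reducedComul ℝ one x)) := by
  rw [conv_sub, conv_convUnit, LinearMap.sub_apply, conv_apply_eq_reducedComul_add one, hψ, hφ,
    one_mul, mul_one]
  abel

theorem isFixedPt_sub_comp_conv_sub_convUnit_iff (hone : IsGroupLikeElem ℝ one)
    {A₁ A₂ : Submodule ℝ A} (hsup : A₁ ⊔ A₂ = ⊤) {P : A →ₗ[ℝ] A} (hP₁ : ∀ a ∈ A₁, P a = a)
    (hP₂ : ∀ a ∈ A₂, P a = 0) (hφ : φ one = 1) (hψ : ψ one = 1) :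
    IsFixedPt (fun f => convUnit C A - P ∘ₗ conv f (φ - convUnit C A)) ψ ↔
      ∀ x, counit (R := ℝ) x = 0 → ψ x ∈ A₁ ∧ conv ψ φ x ∈ A₂ := by
  have hker : ∀ x, counit (R := ℝ) x = 0 →
      (convUnit C A - P ∘ₗ conv ψ (φ - convUnit C A)) x = -P (conv ψ φ x - ψ x) := by
    intro x hx
    rw [LinearMap.sub_apply, LinearMap.comp_apply, conv_sub, conv_convUnit, LinearMap.sub_apply,
      convUnit_apply_of_counit_eq_zero hx, zero_sub]
  constructor
  · intro hfix x hx
    set a := conv ψ φ x - ψ x with ha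
    have hψx : ψ x = -P a := by rw [← hker x hx]; exact (LinearMap.congr_fun hfix x).symm
    have hconv : conv ψ φ x = a - P a := by rw [sub_eq_add_neg, ← hψx, ha, sub_add_cancel]
    obtain ⟨h₁, h₂⟩ := LinearMap.apply_mem_and_sub_apply_mem hsup hP₁ hP₂ a
    exact ⟨hψx ▸ neg_mem h₁, hconv ▸ h₂⟩
  · intro hmem
    refine LinearMap.ext_of_isGroupLikeElem hone ?_ fun x hx => ?_
    · simp [conv_apply_of_isGroupLikeElem hone, convUnit_apply_of_isGroupLikeElem hone, hφ, hψ]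
    · rw [hker x hx, map_sub, hP₂ _ (hmem x hx).2, hP₁ _ (hmem x hx).1, zero_sub, neg_neg]

end Birkhoff

theorem stmt_17_general {C A : Type*} [AddCommGroup C] [Module ℝ C] [Coalgebra ℝ C]
    [Ring A] [Algebra ℝ A]
    (one : C)
    (hone_c : Coalgebra.comul (R := ℝ) one = one ⊗ₜ[ℝ] one)
    (hone_e : Coalgebra.counit (R := ℝ) one = 1)
    (F : ℕ → Submodule ℝ C) (hmono : Monotone F)
    (hF0 : F 0 = Submodule.span ℝ {one})
    (hexh : (⨆ n, F n) = ⊤)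
    (hconil : ∀ n : ℕ, ∀ x ∈ F (n + 1),
      Coalgebra.comul (R := ℝ) x - (one ⊗ₜ[ℝ] x + x ⊗ₜ[ℝ] one) ∈
        LinearMap.range (TensorProduct.map (F n).subtype (F n).subtype))
    (A1 A2 : Submodule ℝ A) (hcompl : IsCompl A1 A2)
    (P : A →ₗ[ℝ] A) (hP1 : ∀ a ∈ A1, P a = a) (hP2 : ∀ a ∈ A2, P a = 0)
    (φ : C →ₗ[ℝ] A) (hφ : φ one = 1) :
    ∃ φ1 φ2 : C →ₗ[ℝ] A,
      φ1 one = 1 ∧ φ2 one = 1 ∧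
      (∀ x : C, Coalgebra.counit (R := ℝ) x = 0 →
        φ1 x = -P (φ x + LinearMap.mul' ℝ A (TensorProduct.map φ1 φ
          (Coalgebra.comul (R := ℝ) x - (one ⊗ₜ[ℝ] x + x ⊗ₜ[ℝ] one))))) ∧
      (∀ x : C, Coalgebra.counit (R := ℝ) x = 0 →
        φ2 x = (φ x + LinearMap.mul' ℝ A (TensorProduct.map φ1 φ
            (Coalgebra.comul (R := ℝ) x - (one ⊗ₜ[ℝ] x + x ⊗ₜ[ℝ] one)))) -
          P (φ x + LinearMap.mul' ℝ A (TensorProduct.map φ1 φ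
            (Coalgebra.comul (R := ℝ) x - (one ⊗ₜ[ℝ] x + x ⊗ₜ[ℝ] one))))) ∧
      (∀ x : C, Coalgebra.counit (R := ℝ) x = 0 → φ1 x ∈ A1 ∧ φ2 x ∈ A2) ∧
      (∃ φ1inv : C →ₗ[ℝ] A, conv φ1 φ1inv = convUnit C A ∧
        conv φ1inv φ1 = convUnit C A ∧ φ = conv φ1inv φ2) ∧
      (∀ ψ1 ψ2 : C →ₗ[ℝ] A, ψ1 one = 1 → ψ2 one = 1 →
        (∀ x : C, Coalgebra.counit (R := ℝ) x = 0 → ψ1 x ∈ A1 ∧ ψ2 x ∈ A2) →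
        (∃ ψ1inv : C →ₗ[ℝ] A, conv ψ1 ψ1inv = convUnit C A ∧
          conv ψ1inv ψ1 = convUnit C A ∧ φ = conv ψ1inv ψ2) →
        ψ1 = φ1 ∧ ψ2 = φ2) := by
  have hone : IsGroupLikeElem ℝ one := ⟨hone_e, hone_c⟩
  have hF : IsConilpotentFiltration ℝ one F := ⟨hmono, hF0, hexh, hconil⟩
  have hβ : (φ - convUnit C A) one = 0 := by
    rw [LinearMap.sub_apply, hφ, convUnit_apply_of_isGroupLikeElem hone, sub_self]
  obtain ⟨φ1, hfix, huniq⟩ := existsUnique_isFixedPt_sub_comp_conv hone hF (convUnit C A) P hβ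
  have hφ1one : φ1 one = 1 := by
    rw [← hfix]
    simp [conv_apply_of_isGroupLikeElem hone, hβ, convUnit_apply_of_isGroupLikeElem hone]
  have hrec1 : ∀ x : C, Coalgebra.counit (R := ℝ) x = 0 → φ1 x = -P (φ x +
      LinearMap.mul' ℝ A (TensorProduct.map φ1 φ (reducedComul ℝ one x))) := fun x hx => by
    conv_lhs => rw [← hfix]
    rw [LinearMap.sub_apply, LinearMap.comp_apply, conv_sub_convUnit_apply hφ hφ1one,
      convUnit_apply_of_counit_eq_zero hx, zero_sub]
  have hiff := fun ψ =>
    isFixedPt_sub_comp_conv_sub_convUnit_iff (ψ := ψ) hone hcompl.sup_eq_top hP1 hP2 hφ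
  obtain ⟨φ1inv, hl, hr⟩ := exists_conv_eq_convUnit hone hF hφ1one
  refine ⟨φ1, conv φ1 φ, hφ1one, ?_, hrec1, fun x hx => ?_, (hiff φ1 hφ1one).mp hfix,
    ⟨φ1inv, hl, hr, by rw [← conv_assoc, hr, convUnit_conv]⟩, ?_⟩
  · rw [conv_apply_of_isGroupLikeElem hone, hφ1one, hφ, one_mul]
  · rw [conv_apply_eq_reducedComul_add one, hrec1 x hx, hφ1one, hφ, one_mul, mul_one,
      reducedComul]
    abel
  · rintro ψ1 ψ2 hψ1 - hmem ⟨ψinv, hl', -, hfac⟩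
    obtain rfl : ψ2 = conv ψ1 φ := by rw [hfac, ← conv_assoc, hl', convUnit_conv]
    obtain rfl := huniq ψ1 ((hiff ψ1 hψ1).mpr hmem)
    exact ⟨rfl, rfl⟩

/-- Algebraic Birkhoff factorization on a connected (conilpotent) coalgebra `C` with
values in a unital algebra `A = A₁ ⊕ A₂`, `1 ∈ A₁`, with projection `P` onto `A₁`
along `A₂`. Every `φ ∈ G(C,A)` factorizes as `φ = φ₁^{∗(-1)} ∗ φ₂` where `φ₁, φ₂`
satisfy on `Ker ε` the recursions
`φ₁(x) = -P(φ(x) + ∑ φ₁(x')φ(x''))`, `φ₂(x) = (id - P)(φ(x) + ∑ φ₁(x')φ(x''))`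
(sum over the reduced coproduct `Δ̄x = Δx - (1⊗x + x⊗1)`), take values in `A₁`, `A₂`
respectively on `Ker ε`; moreover `φ₁, φ₂` are the unique such elements of `G(C,A)`. -/
theorem stmt_17 {C A : Type*} [AddCommGroup C] [Module ℝ C] [Coalgebra ℝ C]
    [Ring A] [Algebra ℝ A]
    (one : C)
    (hone_c : Coalgebra.comul (R := ℝ) one = one ⊗ₜ[ℝ] one)
    (hone_e : Coalgebra.counit (R := ℝ) one = 1)
    (F : ℕ → Submodule ℝ C) (hmono : Monotone F)
    (hF0 : F 0 = Submodule.span ℝ {one})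
    (hexh : (⨆ n, F n) = ⊤)
    (hconil : ∀ n : ℕ, ∀ x ∈ F (n + 1),
      Coalgebra.comul (R := ℝ) x - (one ⊗ₜ[ℝ] x + x ⊗ₜ[ℝ] one) ∈
        LinearMap.range (TensorProduct.map (F n).subtype (F n).subtype))
    (A1 A2 : Submodule ℝ A) (hcompl : IsCompl A1 A2) (h1A : (1 : A) ∈ A1)
    (P : A →ₗ[ℝ] A) (hP1 : ∀ a ∈ A1, P a = a) (hP2 : ∀ a ∈ A2, P a = 0)
    (φ : C →ₗ[ℝ] A) (hφ : φ one = 1) :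
    ∃ φ1 φ2 : C →ₗ[ℝ] A,
      φ1 one = 1 ∧ φ2 one = 1 ∧
      (∀ x : C, Coalgebra.counit (R := ℝ) x = 0 →
        φ1 x = -P (φ x + LinearMap.mul' ℝ A (TensorProduct.map φ1 φ
          (Coalgebra.comul (R := ℝ) x - (one ⊗ₜ[ℝ] x + x ⊗ₜ[ℝ] one))))) ∧
      (∀ x : C, Coalgebra.counit (R := ℝ) x = 0 →
        φ2 x = (φ x + LinearMap.mul' ℝ A (TensorProduct.map φ1 φ
            (Coalgebra.comul (R := ℝ) x - (one ⊗ₜ[ℝ] x + x ⊗ₜ[ℝ] one)))) -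
          P (φ x + LinearMap.mul' ℝ A (TensorProduct.map φ1 φ
            (Coalgebra.comul (R := ℝ) x - (one ⊗ₜ[ℝ] x + x ⊗ₜ[ℝ] one))))) ∧
      (∀ x : C, Coalgebra.counit (R := ℝ) x = 0 → φ1 x ∈ A1 ∧ φ2 x ∈ A2) ∧
      (∃ φ1inv : C →ₗ[ℝ] A, conv φ1 φ1inv = convUnit C A ∧
        conv φ1inv φ1 = convUnit C A ∧ φ = conv φ1inv φ2) ∧
      (∀ ψ1 ψ2 : C →ₗ[ℝ] A, ψ1 one = 1 → ψ2 one = 1 →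
        (∀ x : C, Coalgebra.counit (R := ℝ) x = 0 → ψ1 x ∈ A1 ∧ ψ2 x ∈ A2) →
        (∃ ψ1inv : C →ₗ[ℝ] A, conv ψ1 ψ1inv = convUnit C A ∧
          conv ψ1inv ψ1 = convUnit C A ∧ φ = conv ψ1inv ψ2) →
        ψ1 = φ1 ∧ ψ2 = φ2) :=
  stmt_17_general one hone_c hone_e F hmono hF0 hexh hconil A1 A2 hcompl P hP1 hP2 φ hφ
end

section
/- Let φ(ε) := -1/(e^{-ε} - 1) + 1/ε extended holomorphically at 0 (so φ(ε) = -1/2 - Σ_{k≥1} (B_{2k}/(2k)!) ε^{2k-1}). Then the identity φ((ε_1 - 2ε_2)/3) + φ((2ε_1 - ε_2)/3) = 2·φ((ε_1 - ε_2)/2) fails to hold identically (i.e., there exist ε_1, ε_2 near 0 where the two sides differ), although the Taylor expansions of both sides at (0,0) agree up to order 1. -/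
set_option maxHeartbeats 1000000

noncomputable def gfun : ℝ → ℝ := fun ε => 1 / (Real.exp (-ε) - 1) + 1 / ε

lemma gfun_analytic {x : ℝ} (hx : 0 < x) : AnalyticAt ℝ gfun x := by
  have h1 : AnalyticAt ℝ (fun ε : ℝ => Real.exp (-ε) - 1) x :=
    ((analyticAt_rexp.comp (analyticAt_id.neg)).sub analyticAt_const)
  have hne : Real.exp (-x) - 1 ≠ 0 := by
    have : Real.exp (-x) < 1 := by rw [Real.exp_lt_one_iff]; linarith
    linarith
  exact ((analyticAt_const.div h1 hne)).add (analyticAt_const.div analyticAt_id hx.ne')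

lemma gfun_num : gfun 2 + gfun 4 - 2 * gfun 3 > 0 := by
  have he1 : (2.7182818283 : ℝ) < Real.exp 1 := Real.exp_one_gt_d9
  have he2 : Real.exp 1 < 2.7182818286 := Real.exp_one_lt_d9
  have h2 : Real.exp (-2) = (Real.exp 1 * Real.exp 1)⁻¹ := by
    rw [Real.exp_neg, ← Real.exp_add]; norm_num
  have h3 : Real.exp (-3) = (Real.exp 1 * Real.exp 1 * Real.exp 1)⁻¹ := by
    rw [Real.exp_neg, ← Real.exp_add, ← Real.exp_add]; norm_num
  have h4 : Real.exp (-4) = (Real.exp 1 * Real.exp 1 * (Real.exp 1 * Real.exp 1))⁻¹ := by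
    rw [Real.exp_neg, ← Real.exp_add, ← Real.exp_add]
    norm_num [← Real.exp_add]
  set x := Real.exp 1 with hx
  have hxpos : (0:ℝ) < x := Real.exp_pos 1
  have hxx1 : (7.3890560 : ℝ) < x * x := by nlinarith
  have hxx2 : x * x < 7.3890561 := by nlinarith
  have hx3a : (20.085536 : ℝ) < x * x * x := by nlinarith
  have hx3b : x * x * x < 20.085537 := by nlinarith
  have hx4a : (54.598148 : ℝ) < x * x * (x * x) := by nlinarith
  have hx4b : x * x * (x * x) < 54.598151 := by nlinarith
  have hu1 : (0.1353 : ℝ) < Real.exp (-2) := by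
    rw [h2, lt_inv_comm₀ (by norm_num) (by positivity)]; nlinarith
  have hu2 : Real.exp (-2) < 0.1354 := by
    rw [h2, inv_lt_comm₀ (by positivity) (by norm_num)]; nlinarith
  have hv1 : (0.0497 : ℝ) < Real.exp (-3) := by
    rw [h3, lt_inv_comm₀ (by norm_num) (by positivity)]; nlinarith
  have hv2 : Real.exp (-3) < 0.0498 := by
    rw [h3, inv_lt_comm₀ (by positivity) (by norm_num)]; nlinarith
  have hw1 : (0.0183 : ℝ) < Real.exp (-4) := by
    rw [h4, lt_inv_comm₀ (by norm_num) (by positivity)]; nlinarith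
  have hw2 : Real.exp (-4) < 0.0184 := by
    rw [h4, inv_lt_comm₀ (by positivity) (by norm_num)]; nlinarith
  set u := Real.exp (-2)
  set v := Real.exp (-3)
  set w := Real.exp (-4)
  have hu0 : u - 1 < 0 := by linarith
  have hv0 : v - 1 < 0 := by linarith
  have hw0 : w - 1 < 0 := by linarith
  have hA : (-1.1567 : ℝ) ≤ 1 / (u - 1) := by
    rw [le_div_iff_of_neg hu0]; nlinarith
  have hB : (-1.0188 : ℝ) ≤ 1 / (w - 1) := by
    rw [le_div_iff_of_neg hw0]; nlinarith
  have hC : 1 / (v - 1) ≤ -1.05229 := by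
    rw [div_le_iff_of_neg hv0]; nlinarith
  simp only [gfun]
  norm_num only
  linarith

/-- Let `φ` be the holomorphic extension at `0` of `ε ↦ 1/(e^{-ε} - 1) + 1/ε`
(equivalently of `e^ε/(1-e^ε) + 1/ε`, with Taylor expansion
`φ(ε) = -1/2 - ∑_{k≥1} (B_{2k}/(2k)!) ε^{2k-1}`). Then the identity
`φ((ε₁-2ε₂)/3) + φ((2ε₁-ε₂)/3) = 2·φ((ε₁-ε₂)/2)` fails to hold identically near `0`
(in every neighborhood of `(0,0)` there are points where the two sides differ),
although the Taylor expansions of both sides at `(0,0)` agree up to order `1`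
(equal values and equal first derivatives at the origin). -/
theorem stmt_19 (φ : ℝ → ℝ) (hφa : AnalyticAt ℝ φ 0)
    (hφ : ∀ᶠ ε in nhdsWithin 0 {(0 : ℝ)}ᶜ,
      φ ε = 1 / (Real.exp (-ε) - 1) + 1 / ε) :
    (∀ δ : ℝ, 0 < δ → ∃ ε1 ε2 : ℝ, |ε1| < δ ∧ |ε2| < δ ∧
      φ ((ε1 - 2 * ε2) / 3) + φ ((2 * ε1 - ε2) / 3) ≠ 2 * φ ((ε1 - ε2) / 2)) ∧
    (φ ((0 - 2 * 0) / 3) + φ ((2 * 0 - 0) / 3) = 2 * φ ((0 - 0) / 2)) ∧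
    (fderiv ℝ (fun p : ℝ × ℝ => φ ((p.1 - 2 * p.2) / 3) + φ ((2 * p.1 - p.2) / 3)) 0 =
      fderiv ℝ (fun p : ℝ × ℝ => 2 * φ ((p.1 - p.2) / 2)) 0) := by
  -- extract the radius on which φ = gfun off 0
  obtain ⟨r, hr, hφr⟩ : ∃ r > 0, ∀ ε : ℝ, ε ≠ 0 → |ε| < r → φ ε = gfun ε := by
    rw [eventually_nhdsWithin_iff, Metric.eventually_nhds_iff] at hφ
    obtain ⟨r, hr, h⟩ := hφ
    refine ⟨r, hr, fun ε hne hlt => ?_⟩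
    have := h (show dist ε 0 < r by simpa [Real.dist_eq] using hlt) (by simpa using hne)
    simpa [gfun] using this
  -- the one-variable analytic combination
  set Φ : ℝ → ℝ := fun t => φ (t / 3) + φ (2 * t / 3) - 2 * φ (t / 2) with hΦdef
  have hc1 : AnalyticAt ℝ (fun t : ℝ => φ (t / 3)) 0 := by
    have hi : AnalyticAt ℝ (fun t : ℝ => t / 3) 0 :=
      analyticAt_id.div analyticAt_const (by norm_num)
    have : AnalyticAt ℝ φ ((fun t : ℝ => t / 3) 0) := by simpa using hφa
    exact AnalyticAt.comp (f := fun t : ℝ => t / 3) this hi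
  have hc2 : AnalyticAt ℝ (fun t : ℝ => φ (2 * t / 3)) 0 := by
    have hi : AnalyticAt ℝ (fun t : ℝ => 2 * t / 3) 0 :=
      (analyticAt_const.mul analyticAt_id).div analyticAt_const (by norm_num)
    have : AnalyticAt ℝ φ ((fun t : ℝ => 2 * t / 3) 0) := by simpa using hφa
    exact AnalyticAt.comp (f := fun t : ℝ => 2 * t / 3) this hi
  have hc3 : AnalyticAt ℝ (fun t : ℝ => φ (t / 2)) 0 := by
    have hi : AnalyticAt ℝ (fun t : ℝ => t / 2) 0 :=
      analyticAt_id.div analyticAt_const (by norm_num)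
    have : AnalyticAt ℝ φ ((fun t : ℝ => t / 2) 0) := by simpa using hφa
    exact AnalyticAt.comp (f := fun t : ℝ => t / 2) this hi
  have hΦa : AnalyticAt ℝ Φ 0 := (hc1.add hc2).sub (analyticAt_const.mul hc3)
  refine ⟨?_, ?_, ?_⟩
  · -- the identity fails in every neighborhood of the origin
    intro δ hδ
    rcases hΦa.eventually_eq_zero_or_eventually_ne_zero with hz | hnz
    · -- Φ ≡ 0 near 0 is impossible: propagate to t = 6 via gfun
      exfalso
      rw [Metric.eventually_nhds_iff] at hz
      obtain ⟨c, hc, hc0⟩ := hz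
      set m := min c r with hm
      have hmpos : 0 < m := lt_min hc hr
      have hG0 : ∀ t ∈ Set.Ioo (0:ℝ) m,
          gfun (t / 3) + gfun (2 * t / 3) - 2 * gfun (t / 2) = 0 := by
        intro t ht
        obtain ⟨ht0, htm⟩ := ht
        have htr : t < r := lt_of_lt_of_le htm (min_le_right c r)
        have htc : t < c := lt_of_lt_of_le htm (min_le_left c r)
        have e1 : φ (t / 3) = gfun (t / 3) := by
          refine hφr _ (by positivity) ?_
          rw [abs_of_pos (by positivity)]; linarith
        have e2 : φ (2 * t / 3) = gfun (2 * t / 3) := by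
          refine hφr _ (by positivity) ?_
          rw [abs_of_pos (by positivity)]; linarith
        have e3 : φ (t / 2) = gfun (t / 2) := by
          refine hφr _ (by positivity) ?_
          rw [abs_of_pos (by positivity)]; linarith
        have := hc0 (show dist t 0 < c by rw [Real.dist_eq, sub_zero, abs_of_pos ht0]; exact htc)
        rw [hΦdef] at this
        simp only at this
        rw [e1, e2, e3] at this
        exact this
      -- identity theorem on (0, ∞)
      have hGana : AnalyticOnNhd ℝ
          (fun t : ℝ => gfun (t / 3) + gfun (2 * t / 3) - 2 * gfun (t / 2)) (Set.Ioi 0) := by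
        intro x hx
        have hx0 : (0:ℝ) < x := hx
        have a1 : AnalyticAt ℝ (fun t : ℝ => gfun (t / 3)) x := by
          have hi : AnalyticAt ℝ (fun t : ℝ => t / 3) x :=
            analyticAt_id.div analyticAt_const (by norm_num)
          exact AnalyticAt.comp (f := fun t : ℝ => t / 3) (gfun_analytic (x := x / 3) (by positivity)) hi
        have a2 : AnalyticAt ℝ (fun t : ℝ => gfun (2 * t / 3)) x := by
          have hi : AnalyticAt ℝ (fun t : ℝ => 2 * t / 3) x :=
            (analyticAt_const.mul analyticAt_id).div analyticAt_const (by norm_num)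
          exact AnalyticAt.comp (f := fun t : ℝ => 2 * t / 3) (gfun_analytic (x := 2 * x / 3) (by positivity)) hi
        have a3 : AnalyticAt ℝ (fun t : ℝ => gfun (t / 2)) x := by
          have hi : AnalyticAt ℝ (fun t : ℝ => t / 2) x :=
            analyticAt_id.div analyticAt_const (by norm_num)
          exact AnalyticAt.comp (f := fun t : ℝ => t / 2) (gfun_analytic (x := x / 2) (by positivity)) hi
        exact (a1.add a2).sub (analyticAt_const.mul a3)
      have hev : (fun t : ℝ => gfun (t / 3) + gfun (2 * t / 3) - 2 * gfun (t / 2))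
          =ᶠ[nhds (m / 2)] 0 := by
        filter_upwards [Ioo_mem_nhds (by positivity : (0:ℝ) < m / 2) (by linarith : m / 2 < m)]
          with t ht
        exact hG0 t ht
      have hall := hGana.eqOn_zero_of_preconnected_of_eventuallyEq_zero
        isPreconnected_Ioi (Set.mem_Ioi.mpr (by positivity)) hev
      have h6 := hall (by norm_num : (6:ℝ) ∈ Set.Ioi (0:ℝ))
      simp only [Pi.zero_apply] at h6
      have e1 : (6:ℝ) / 3 = 2 := by norm_num
      have e2 : 2 * (6:ℝ) / 3 = 4 := by norm_num
      have e3 : (6:ℝ) / 2 = 3 := by norm_num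
      rw [e1, e2, e3] at h6
      linarith [gfun_num]
    · -- Φ eventually nonzero off 0: pick a witness with |t| < δ
      have hδ' : ∀ᶠ t in nhdsWithin 0 {(0:ℝ)}ᶜ, |t| < δ := by
        apply eventually_nhdsWithin_of_eventually_nhds
        filter_upwards [Metric.ball_mem_nhds (0:ℝ) hδ] with t ht
        simpa [Real.dist_eq] using ht
      obtain ⟨t, hΦt, htδ⟩ := (hnz.and hδ').exists
      refine ⟨t, 0, htδ, by simpa using hδ, ?_⟩
      intro h
      apply hΦt
      rw [hΦdef]
      simp only
      rw [show (t - 2 * 0) / 3 = t / 3 by ring, show (2 * t - 0) / 3 = 2 * t / 3 by ring,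
        show (t - 0) / 2 = t / 2 by ring] at h
      linarith
  · -- values at the origin agree
    norm_num
    ring
  · -- first derivatives at the origin agree
    have hdiff : DifferentiableAt ℝ φ 0 := hφa.differentiableAt
    set D := fderiv ℝ φ 0 with hD
    set L1 : ℝ × ℝ →L[ℝ] ℝ :=
      (3:ℝ)⁻¹ • (ContinuousLinearMap.fst ℝ ℝ ℝ - (2:ℝ) • ContinuousLinearMap.snd ℝ ℝ ℝ) with hL1
    set L2 : ℝ × ℝ →L[ℝ] ℝ :=
      (3:ℝ)⁻¹ • ((2:ℝ) • ContinuousLinearMap.fst ℝ ℝ ℝ - ContinuousLinearMap.snd ℝ ℝ ℝ) with hL2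
    set L3 : ℝ × ℝ →L[ℝ] ℝ :=
      (2:ℝ)⁻¹ • (ContinuousLinearMap.fst ℝ ℝ ℝ - ContinuousLinearMap.snd ℝ ℝ ℝ) with hL3
    have hf1 : (fun p : ℝ × ℝ => (p.1 - 2 * p.2) / 3) = ⇑L1 := by
      funext p; simp [hL1]; ring
    have hf2 : (fun p : ℝ × ℝ => (2 * p.1 - p.2) / 3) = ⇑L2 := by
      funext p; simp [hL2]; ring
    have hf3 : (fun p : ℝ × ℝ => (p.1 - p.2) / 2) = ⇑L3 := by
      funext p; simp [hL3]; ring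
    have hfd1 : HasFDerivAt (fun p : ℝ × ℝ => φ ((p.1 - 2 * p.2) / 3)) (D.comp L1) 0 := by
      have hin : HasFDerivAt (fun p : ℝ × ℝ => (p.1 - 2 * p.2) / 3) L1 0 := by
        rw [hf1]; exact L1.hasFDerivAt
      have hout : HasFDerivAt φ D ((fun p : ℝ × ℝ => (p.1 - 2 * p.2) / 3) 0) := by
        simpa using hdiff.hasFDerivAt
      exact hout.comp 0 hin
    have hfd2 : HasFDerivAt (fun p : ℝ × ℝ => φ ((2 * p.1 - p.2) / 3)) (D.comp L2) 0 := by
      have hin : HasFDerivAt (fun p : ℝ × ℝ => (2 * p.1 - p.2) / 3) L2 0 := by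
        rw [hf2]; exact L2.hasFDerivAt
      have hout : HasFDerivAt φ D ((fun p : ℝ × ℝ => (2 * p.1 - p.2) / 3) 0) := by
        simpa using hdiff.hasFDerivAt
      exact hout.comp 0 hin
    have hfd3 : HasFDerivAt (fun p : ℝ × ℝ => φ ((p.1 - p.2) / 2)) (D.comp L3) 0 := by
      have hin : HasFDerivAt (fun p : ℝ × ℝ => (p.1 - p.2) / 2) L3 0 := by
        rw [hf3]; exact L3.hasFDerivAt
      have hout : HasFDerivAt φ D ((fun p : ℝ × ℝ => (p.1 - p.2) / 2) 0) := by
        simpa using hdiff.hasFDerivAt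
      exact hout.comp 0 hin
    have hL : fderiv ℝ (fun p : ℝ × ℝ => φ ((p.1 - 2 * p.2) / 3) + φ ((2 * p.1 - p.2) / 3)) 0
        = D.comp L1 + D.comp L2 := (hfd1.add hfd2).fderiv
    have hR : fderiv ℝ (fun p : ℝ × ℝ => 2 * φ ((p.1 - p.2) / 2)) 0
        = (2:ℝ) • (D.comp L3) := (hfd3.const_mul 2).fderiv
    rw [hL, hR]
    refine ContinuousLinearMap.ext fun p => ?_
    simp only [ContinuousLinearMap.add_apply, ContinuousLinearMap.comp_apply,
      ContinuousLinearMap.smul_apply, ← hf1, ← hf2, ← hf3]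
    have key : (p.1 - 2 * p.2) / 3 + (2 * p.1 - p.2) / 3 = (2:ℝ) • ((p.1 - p.2) / 2) := by
      simp [smul_eq_mul]; ring
    rw [← map_add, key, map_smul]
end
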